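/- Let u₁, u₂, u₃, v₁, v₂, v₃ ∈ A*, let s be the longest suffix of u₂v₁v₂ that is also a prefix of u₂u₃v₂, and write u₂v₁v₂ = rs, u₂u₃v₂ = st. Then (ū₁ · shuffle(u₂, ū₂) · u₃)(v̄₁ · shuffle(v₂, v̄₂) · v₃) ≡ ū₁ r̄ · shuffle(s, s̄) · t v₃. -/
import Mathlib


/-- A basic queue action: write a letter or read a letter. -/
inductive Act (A : Type) : Type
  | wr (a : A)
  | rd (a : A)
deriving DecidableEq

variable {A : Type} [DecidableEq A]

/-- The action of words over `Act A` on queue states `A* ∪ {⊥}` (⊥ = `none`). -/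
def act : Option (List A) → List (Act A) → Option (List A)
  | q, [] => q
  | none, _ :: _ => none
  | some q, (Act.wr a) :: u => act (some (q ++ [a])) u
  | some q, (Act.rd a) :: u =>
    match q with
    | [] => none
    | b :: q' => if b = a then act (some q') u else none

/-- Two words over `Act A` are equivalent if they act identically on all queues. -/
def qequiv (u v : List (Act A)) : Prop := ∀ q : List A, act (some q) u = act (some q) v

/-- Writing the word `w`. -/
def W (w : List A) : List (Act A) := w.map Act.wr

/-- Reading the word `w` (the barred copy of `w`). -/
def R (w : List A) : List (Act A) := w.map Act.rd

/-- `shuffle s` is the word `s₁ s̄₁ s₂ s̄₂ … sₖ s̄ₖ`. -/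
def shuffle (s : List A) : List (Act A) := s.flatMap fun a => [Act.wr a, Act.rd a]

/-- The projection to write letters. -/
def prW (w : List (Act A)) : List A :=
  w.filterMap fun x => match x with | Act.wr a => some a | Act.rd _ => none

/-- The projection to read letters (with the bars removed). -/
def prR (w : List (Act A)) : List A :=
  w.filterMap fun x => match x with | Act.wr _ => none | Act.rd a => some a

theorem act_append (u v : List (Act A)) : ∀ q, act q (u ++ v) = act (act q u) v := by
  induction u with
  | nil =>
      intro q
      cases q <;> rfl
  | cons x u ih =>
      intro q
      cases q with
      | none =>
          simp only [List.cons_append, act]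
          cases v with
          | nil => rfl
          | cons _ _ => rfl
      | some q =>
          cases x with
          | wr a => simpa [act] using ih _
          | rd a =>
              cases q with
              | nil =>
                  simp only [List.cons_append, act]
                  cases v with
                  | nil => rfl
                  | cons _ _ => rfl
              | cons b q' =>
                  by_cases h : b = a
                  · simp [List.cons_append, act, h, ih]
                  · simp only [List.cons_append, act, if_neg h]
                    cases v with
                    | nil => rfl
                    | cons _ _ => rfl

/-- The setoid of queue-action equivalence. -/
def qsetoid (A : Type) [DecidableEq A] : Setoid (List (Act A)) :=
  ⟨qequiv, ⟨fun _ _ => rfl, fun h q => (h q).symm, fun h1 h2 q => (h1 q).trans (h2 q)⟩⟩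

/-- The monoid of queue actions. -/
def QAct (A : Type) [DecidableEq A] : Type := Quotient (qsetoid A)

theorem act_none : ∀ v : List (Act A), act (none : Option (List A)) v = none
  | [] => rfl
  | _ :: _ => rfl

theorem qequiv_append {u u' v v' : List (Act A)} (hu : qequiv u u') (hv : qequiv v v') :
    qequiv (u ++ v) (u' ++ v') := by
  intro q
  rw [act_append, act_append, hu q]
  cases h : act (some q) u' with
  | none => rw [act_none, act_none]
  | some q' => exact hv q'

instance : Monoid (QAct A) where
  mul := Quotient.map₂ (· ++ ·) (fun _ _ hu _ _ hv => qequiv_append hu hv)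
  one := Quotient.mk (qsetoid A) []
  mul_assoc := by
    rintro ⟨u⟩ ⟨v⟩ ⟨w⟩
    exact congrArg (Quotient.mk (qsetoid A)) (List.append_assoc u v w)
  one_mul := by
    rintro ⟨u⟩
    rfl
  mul_one := by
    rintro ⟨u⟩
    exact congrArg (Quotient.mk (qsetoid A)) (List.append_nil u)

/-- The class of a word in the monoid of queue actions. -/
def cls (w : List (Act A)) : QAct A := Quotient.mk (qsetoid A) w

theorem cls_mul (u v : List (Act A)) : cls u * cls v = cls (u ++ v) := rfl

theorem act_W' (w : List A) : ∀ q : List A, act (some q) (W w) = some (q ++ w) := by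
  induction w with
  | nil => intro q; simp [W, act]
  | cons a w ih =>
      intro q
      have : W (a :: w) = Act.wr a :: W w := rfl
      rw [this]
      show act (some (q ++ [a])) (W w) = some (q ++ a :: w)
      rw [ih]
      simp

theorem act_R' (w : List A) : ∀ q : List A,
    act (some q) (R w) = if w <+: q then some (q.drop w.length) else none := by
  induction w with
  | nil => intro q; simp [R, act]
  | cons a w ih =>
      intro q
      have hRw : R (a :: w) = Act.rd a :: R w := rfl
      rw [hRw]
      cases q with
      | nil => simp [act]
      | cons b q' =>
          show (if b = a then act (some q') (R w) else none) = _
          by_cases hba : b = a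
          · subst hba
            rw [if_pos rfl, ih]
            simp [List.cons_prefix_cons]
          · rw [if_neg hba, if_neg]
            simp only [List.cons_prefix_cons]
            exact fun h => hba h.1.symm

theorem act_shuffle' (s : List A) : ∀ q : List A,
    act (some q) (shuffle s) =
      if s <+: q ++ s then some ((q ++ s).drop s.length) else none := by
  induction s with
  | nil => intro q; simp [shuffle, act]
  | cons a s ih =>
      intro q
      have hsh : shuffle (a :: s) = Act.wr a :: Act.rd a :: shuffle s := rfl
      rw [hsh]
      cases q with
      | nil =>
          show act (some [a]) (Act.rd a :: shuffle s) = _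
          have : act (some [a]) (Act.rd a :: shuffle s) = act (some []) (shuffle s) := by
            simp [act]
          rw [this, ih]
          simp
      | cons c q' =>
          by_cases hca : c = a
          · subst hca
            show act (some ((c :: q') ++ [c])) (Act.rd c :: shuffle s) = _
            have : act (some ((c :: q') ++ [c])) (Act.rd c :: shuffle s)
                = act (some (q' ++ [c])) (shuffle s) := by simp [act]
            rw [this, ih]
            have h1 : (c :: q') ++ (c :: s) = c :: ((q' ++ [c]) ++ s) := by simp
            rw [h1]
            simp [List.cons_prefix_cons]
          · show act (some ((c :: q') ++ [a])) (Act.rd a :: shuffle s) = _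
            have : act (some ((c :: q') ++ [a])) (Act.rd a :: shuffle s) = none := by
              simp [act, hca]
            rw [this, if_neg]
            have h1 : (c :: q') ++ (a :: s) = c :: (q' ++ a :: s) := by simp
            rw [h1]
            simp only [List.cons_prefix_cons]
            exact fun h => hca h.1.symm

omit [DecidableEq A] in
theorem prefix_shorten {p l z : List A} (h : p <+: l ++ z) (hl : p.length ≤ l.length) :
    p <+: l := by
  rw [List.prefix_iff_eq_take] at h ⊢
  rwa [List.take_append_of_le_length hl] at h

theorem Reval (r s t v₃ : List A) (q₁ : List A) :
    act (some q₁) (R r ++ (shuffle s ++ (W t ++ W v₃))) =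
      if r <+: q₁ ∧ s <+: q₁.drop r.length ++ s then
        some ((q₁.drop r.length ++ s).drop s.length ++ t ++ v₃)
      else none := by
  rw [act_append, act_R']
  by_cases h1 : r <+: q₁
  · rw [if_pos h1, act_append, act_shuffle']
    by_cases h2 : s <+: q₁.drop r.length ++ s
    · rw [if_pos h2, act_append, act_W', act_W', if_pos ⟨h1, h2⟩]
    · rw [if_neg h2, act_none, if_neg (fun h => h2 h.2)]
  · rw [if_neg h1, act_none, if_neg (fun h => h1 h.1)]

theorem Leval (u₂ u₃ v₁ v₂ v₃ : List A) (q₁ : List A) :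
    act (some q₁) (shuffle u₂ ++ (W u₃ ++ (R v₁ ++ (shuffle v₂ ++ W v₃)))) =
      if (u₂ ++ v₁ ++ v₂) <+: q₁ ++ (u₂ ++ u₃ ++ v₂) then
        some ((q₁ ++ (u₂ ++ u₃ ++ v₂)).drop (u₂ ++ v₁ ++ v₂).length ++ v₃)
      else none := by
  rw [act_append, act_shuffle']
  by_cases h1 : u₂ <+: q₁ ++ u₂
  · rw [if_pos h1]
    obtain ⟨q₂, hq₂⟩ := h1
    have hd2 : (q₁ ++ u₂).drop u₂.length = q₂ := by rw [← hq₂, List.drop_left]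
    rw [hd2, act_append, act_W', act_append, act_R']
    by_cases h2 : v₁ <+: q₂ ++ u₃
    · rw [if_pos h2]
      obtain ⟨q₃, hq₃⟩ := h2
      have hd3 : (q₂ ++ u₃).drop v₁.length = q₃ := by rw [← hq₃, List.drop_left]
      rw [hd3, act_append, act_shuffle']
      by_cases h3 : v₂ <+: q₃ ++ v₂
      · rw [if_pos h3]
        obtain ⟨q₄, hq₄⟩ := h3
        have hd4 : (q₃ ++ v₂).drop v₂.length = q₄ := by rw [← hq₄, List.drop_left]
        rw [hd4, act_W']
        have hchain : (u₂ ++ v₁ ++ v₂) ++ q₄ = q₁ ++ (u₂ ++ u₃ ++ v₂) := by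
          have hmid : q₁ ++ (u₂ ++ (u₃ ++ v₂)) = u₂ ++ (v₁ ++ (v₂ ++ q₄)) := by
            rw [← List.append_assoc q₁, ← hq₂, List.append_assoc u₂ q₂,
              ← List.append_assoc q₂, ← hq₃, List.append_assoc v₁ q₃, ← hq₄]
          calc (u₂ ++ v₁ ++ v₂) ++ q₄ = u₂ ++ (v₁ ++ (v₂ ++ q₄)) := by
                simp [List.append_assoc]
            _ = q₁ ++ (u₂ ++ (u₃ ++ v₂)) := hmid.symm
            _ = q₁ ++ (u₂ ++ u₃ ++ v₂) := by simp [List.append_assoc]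
        rw [if_pos ⟨q₄, hchain⟩, ← hchain, List.drop_left]
      · rw [if_neg h3, act_none, if_neg]
        intro ⟨z, hz⟩
        apply h3
        refine ⟨z, ?_⟩
        have hzz : u₂ ++ (v₁ ++ (q₃ ++ v₂)) = u₂ ++ (v₁ ++ (v₂ ++ z)) := by
          calc u₂ ++ (v₁ ++ (q₃ ++ v₂)) = q₁ ++ (u₂ ++ u₃ ++ v₂) := by
                rw [List.append_assoc u₂ u₃ v₂, ← List.append_assoc q₁, ← hq₂,
                  List.append_assoc u₂ q₂, ← List.append_assoc q₂, ← hq₃,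
                  List.append_assoc v₁ q₃]
            _ = u₂ ++ (v₁ ++ (v₂ ++ z)) := by
                rw [← hz]; simp [List.append_assoc]
        have := List.append_cancel_left hzz
        exact (List.append_cancel_left this).symm
    · rw [if_neg h2, act_none, if_neg]
      intro ⟨z, hz⟩
      apply h2
      have hq₂l : q₂.length = q₁.length := by
        have := congrArg List.length hq₂
        simp at this
        omega
      have hlen : v₁.length ≤ (q₂ ++ u₃).length := by
        have := congrArg List.length hz
        simp at this ⊢
        omega
      have hzz : u₂ ++ (q₂ ++ (u₃ ++ v₂)) = u₂ ++ (v₁ ++ (v₂ ++ z)) := by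
        calc u₂ ++ (q₂ ++ (u₃ ++ v₂)) = (u₂ ++ q₂) ++ (u₃ ++ v₂) := by
              simp [List.append_assoc]
          _ = (q₁ ++ u₂) ++ (u₃ ++ v₂) := by rw [hq₂]
          _ = q₁ ++ (u₂ ++ u₃ ++ v₂) := by simp [List.append_assoc]
          _ = u₂ ++ v₁ ++ v₂ ++ z := hz.symm
          _ = u₂ ++ (v₁ ++ (v₂ ++ z)) := by simp [List.append_assoc]
      have hc := List.append_cancel_left hzz
      have hpre : v₁ <+: (q₂ ++ u₃) ++ v₂ := by
        rw [List.append_assoc]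
        exact ⟨v₂ ++ z, hc.symm⟩
      exact prefix_shorten hpre hlen
  · rw [if_neg h1, act_none, if_neg]
    intro hc
    apply h1
    have : u₂ <+: q₁ ++ (u₂ ++ u₃ ++ v₂) := by
      refine List.IsPrefix.trans ?_ hc
      rw [List.append_assoc]
      exact List.prefix_append _ _
    rw [show q₁ ++ (u₂ ++ u₃ ++ v₂) = (q₁ ++ u₂) ++ (u₃ ++ v₂) by simp [List.append_assoc]] at this
    refine prefix_shorten this ?_
    simp

/-- Multiplication of normal forms: if `s` is the longest suffix of `u₂v₁v₂` that is also a
prefix of `u₂u₃v₂`, with `u₂v₁v₂ = r s` and `u₂u₃v₂ = s t`, then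
`(ū₁ · shuffle(u₂,ū₂) · u₃)(v̄₁ · shuffle(v₂,v̄₂) · v₃) ≡ ū₁ r̄ · shuffle(s,s̄) · t v₃`. -/
theorem stmt11 [Fintype A] [Nontrivial A] (u₁ u₂ u₃ v₁ v₂ v₃ r s t : List A)
    (hr : u₂ ++ v₁ ++ v₂ = r ++ s) (ht : u₂ ++ u₃ ++ v₂ = s ++ t)
    (hmax : ∀ s' : List A, s' <:+ (u₂ ++ v₁ ++ v₂) → s' <+: (u₂ ++ u₃ ++ v₂) →
      s'.length ≤ s.length) :
    qequiv ((R u₁ ++ shuffle u₂ ++ W u₃) ++ (R v₁ ++ shuffle v₂ ++ W v₃))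
      (R u₁ ++ R r ++ shuffle s ++ W t ++ W v₃) := by
  have key : ∀ q₁ : List A,
      act (some q₁) (shuffle u₂ ++ (W u₃ ++ (R v₁ ++ (shuffle v₂ ++ W v₃)))) =
      act (some q₁) (R r ++ (shuffle s ++ (W t ++ W v₃))) := by
    intro q₁
    rw [Leval u₂ u₃ v₁ v₂ v₃ q₁, Reval r s t v₃ q₁]
    by_cases hP : (u₂ ++ v₁ ++ v₂) <+: q₁ ++ (u₂ ++ u₃ ++ v₂)
    · rw [if_pos hP]
      obtain ⟨z, hz⟩ := hP
      have hxlen : (u₂ ++ v₁ ++ v₂).length = r.length + s.length := by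
        have := congrArg List.length hr
        simpa using this
      have hrq : r.length ≤ q₁.length := by
        by_contra hlt
        push_neg at hlt
        have hq₁x : q₁.length ≤ (u₂ ++ v₁ ++ v₂).length := by omega
        have hdropeq : (u₂ ++ v₁ ++ v₂).drop q₁.length ++ z = u₂ ++ u₃ ++ v₂ := by
          have h := congrArg (List.drop q₁.length) hz
          rwa [List.drop_append_of_le_length hq₁x, List.drop_left] at h
        have hle := hmax _ (List.drop_suffix _ _) ⟨z, hdropeq⟩
        rw [List.length_drop] at hle
        omega
      have hrpre : r <+: q₁ := by
        refine prefix_shorten (z := u₂ ++ u₃ ++ v₂) ?_ hrq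
        refine List.IsPrefix.trans ?_ ⟨z, hz⟩
        rw [hr]
        exact List.prefix_append r s
      obtain ⟨p, hp⟩ := hrpre
      have hdp : q₁.drop r.length = p := by rw [← hp, List.drop_left]
      have hps : p ++ (s ++ t) = s ++ z := by
        apply List.append_cancel_left (as := r)
        calc r ++ (p ++ (s ++ t)) = (r ++ p) ++ (s ++ t) := by
              simp [List.append_assoc]
          _ = q₁ ++ (u₂ ++ u₃ ++ v₂) := by rw [hp, ht]
          _ = (u₂ ++ v₁ ++ v₂) ++ z := hz.symm
          _ = (r ++ s) ++ z := by rw [hr]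
          _ = r ++ (s ++ z) := by simp [List.append_assoc]
      have hspre : s <+: p ++ s := by
        refine prefix_shorten (z := t) ?_ (by simp)
        rw [List.append_assoc]
        exact ⟨z, hps.symm⟩
      rw [if_pos ⟨⟨p, hp⟩, by rw [hdp]; exact hspre⟩]
      obtain ⟨w, hw⟩ := hspre
      have hzw : z = w ++ t := by
        apply List.append_cancel_left (as := s)
        calc s ++ z = p ++ (s ++ t) := hps.symm
          _ = (p ++ s) ++ t := by simp [List.append_assoc]
          _ = (s ++ w) ++ t := by rw [hw]
          _ = s ++ (w ++ t) := by simp [List.append_assoc]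
      have e1 : (q₁ ++ (u₂ ++ u₃ ++ v₂)).drop (u₂ ++ v₁ ++ v₂).length = z := by
        rw [← hz, List.drop_left]
      have e2 : (q₁.drop r.length ++ s).drop s.length = w := by
        rw [hdp, ← hw, List.drop_left]
      rw [e1, e2, hzw]
    · rw [if_neg hP, if_neg]
      intro ⟨hc1, hc2⟩
      apply hP
      obtain ⟨p, hp⟩ := hc1
      have hdp : q₁.drop r.length = p := by rw [← hp, List.drop_left]
      rw [hdp] at hc2
      obtain ⟨w, hw⟩ := hc2
      refine ⟨w ++ t, ?_⟩
      calc (u₂ ++ v₁ ++ v₂) ++ (w ++ t) = (r ++ s) ++ (w ++ t) := by rw [hr]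
        _ = r ++ ((s ++ w) ++ t) := by simp [List.append_assoc]
        _ = r ++ ((p ++ s) ++ t) := by rw [hw]
        _ = (r ++ p) ++ (s ++ t) := by simp [List.append_assoc]
        _ = q₁ ++ (u₂ ++ u₃ ++ v₂) := by rw [hp, ht]
  have e1 : (R u₁ ++ shuffle u₂ ++ W u₃) ++ (R v₁ ++ shuffle v₂ ++ W v₃)
      = R u₁ ++ (shuffle u₂ ++ (W u₃ ++ (R v₁ ++ (shuffle v₂ ++ W v₃)))) := by
    simp [List.append_assoc]
  have e2 : R u₁ ++ R r ++ shuffle s ++ W t ++ W v₃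
      = R u₁ ++ (R r ++ (shuffle s ++ (W t ++ W v₃))) := by
    simp [List.append_assoc]
  rw [e1, e2]
  exact qequiv_append (fun _ => rfl) key
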